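/- arXiv:2303.15802 — 2 statements merged into one kernel-verified Lean document; each statement's English description precedes it below -/
import Mathlib

section
/- The map sending a brick B to T(B), the smallest torsion class containing B, induces a bijection from the set of isomorphism classes of bricks in mod A to the set of completely join irreducible elements of the complete lattice tors A. -/
/-! Preamble: the category `mod A` of finite-dimensional right `A`-modules,
torsion(-free) classes, the complete lattice `tors A`, functorially finite
torsion classes, bricks, etc. -/

open Function

/-- A bundled finite-dimensional (i.e. finitely generated) right `A`-module,
realized as a left module over `Aᵐᵒᵖ`. -/
structure ModA (A : Type) [Ring A] : Type 1 where
  carrier : Type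
  [isAddCommGroup : AddCommGroup carrier]
  [isModule : Module Aᵐᵒᵖ carrier]
  [isFinite : Module.Finite Aᵐᵒᵖ carrier]

attribute [instance] ModA.isAddCommGroup ModA.isModule ModA.isFinite

namespace ModA

variable {A : Type} [Ring A]

instance : CoeSort (ModA A) Type := ⟨ModA.carrier⟩

end ModA

section TorsionTheory

variable {A : Type} [Ring A]

/-- A torsion class: a class of finite-dimensional right `A`-modules containing the
zero modules, closed under quotient modules and under extensions. -/
def IsTorsionClass (T : Set (ModA A)) : Prop :=
  (∀ N : ModA A, Subsingleton N.carrier → N ∈ T) ∧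
  (∀ M N : ModA A, M ∈ T → ∀ f : M.carrier →ₗ[Aᵐᵒᵖ] N.carrier, Surjective f → N ∈ T) ∧
  (∀ (X Y Z : ModA A) (f : X.carrier →ₗ[Aᵐᵒᵖ] Y.carrier) (g : Y.carrier →ₗ[Aᵐᵒᵖ] Z.carrier),
    Injective f → Surjective g → LinearMap.range f = LinearMap.ker g →
    X ∈ T → Z ∈ T → Y ∈ T)

/-- A torsion-free class: a class of finite-dimensional right `A`-modules containing the
zero modules, closed under submodules and under extensions. -/
def IsTorsionFreeClass (F : Set (ModA A)) : Prop :=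
  (∀ N : ModA A, Subsingleton N.carrier → N ∈ F) ∧
  (∀ M N : ModA A, M ∈ F → ∀ f : N.carrier →ₗ[Aᵐᵒᵖ] M.carrier, Injective f → N ∈ F) ∧
  (∀ (X Y Z : ModA A) (f : X.carrier →ₗ[Aᵐᵒᵖ] Y.carrier) (g : Y.carrier →ₗ[Aᵐᵒᵖ] Z.carrier),
    Injective f → Surjective g → LinearMap.range f = LinearMap.ker g →
    X ∈ F → Z ∈ F → Y ∈ F)

theorem isTorsionClass_sInter {S : Set (Set (ModA A))} (h : ∀ T ∈ S, IsTorsionClass T) :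
    IsTorsionClass (⋂₀ S) := by
  refine ⟨fun N hN => ?_, fun M N hM f hf => ?_, fun X Y Z f g hf hg he hX hZ => ?_⟩
  · exact Set.mem_sInter.2 fun T hT => (h T hT).1 N hN
  · exact Set.mem_sInter.2 fun T hT => (h T hT).2.1 M N (Set.mem_sInter.1 hM T hT) f hf
  · exact Set.mem_sInter.2 fun T hT =>
      (h T hT).2.2 X Y Z f g hf hg he (Set.mem_sInter.1 hX T hT) (Set.mem_sInter.1 hZ T hT)

theorem isTorsionFreeClass_sInter {S : Set (Set (ModA A))} (h : ∀ F ∈ S, IsTorsionFreeClass F) :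
    IsTorsionFreeClass (⋂₀ S) := by
  refine ⟨fun N hN => ?_, fun M N hM f hf => ?_, fun X Y Z f g hf hg he hX hZ => ?_⟩
  · exact Set.mem_sInter.2 fun T hT => (h T hT).1 N hN
  · exact Set.mem_sInter.2 fun T hT => (h T hT).2.1 M N (Set.mem_sInter.1 hM T hT) f hf
  · exact Set.mem_sInter.2 fun T hT =>
      (h T hT).2.2 X Y Z f g hf hg he (Set.mem_sInter.1 hX T hT) (Set.mem_sInter.1 hZ T hT)

end TorsionTheory

/-- `tors A`: the poset of all torsion classes in `mod A`, ordered by inclusion. -/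
def Tors (A : Type) [Ring A] : Type 1 := {T : Set (ModA A) // IsTorsionClass T}

/-- `torf A`: the poset of all torsion-free classes in `mod A`, ordered by inclusion. -/
def Torf (A : Type) [Ring A] : Type 1 := {F : Set (ModA A) // IsTorsionFreeClass F}

namespace Tors

variable {A : Type} [Ring A]

instance : PartialOrder (Tors A) := Subtype.partialOrder _

instance : InfSet (Tors A) :=
  ⟨fun S => ⟨⋂₀ (Subtype.val '' S),
    isTorsionClass_sInter (by rintro _ ⟨T, _, rfl⟩; exact T.2)⟩⟩

/-- `tors A` is a complete lattice, with meets given by intersections. -/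
instance : CompleteLattice (Tors A) :=
  completeLatticeOfInf _ (fun S =>
    ⟨fun T hT => Set.sInter_subset_of_mem ⟨T, hT, rfl⟩,
     fun L hL => Set.subset_sInter (by rintro _ ⟨T, hT, rfl⟩; exact hL hT)⟩)

end Tors

namespace Torf

variable {A : Type} [Ring A]

instance : PartialOrder (Torf A) := Subtype.partialOrder _

instance : InfSet (Torf A) :=
  ⟨fun S => ⟨⋂₀ (Subtype.val '' S),
    isTorsionFreeClass_sInter (by rintro _ ⟨T, _, rfl⟩; exact T.2)⟩⟩

/-- `torf A` is a complete lattice, with meets given by intersections. -/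
instance : CompleteLattice (Torf A) :=
  completeLatticeOfInf _ (fun S =>
    ⟨fun T hT => Set.sInter_subset_of_mem ⟨T, hT, rfl⟩,
     fun L hL => Set.subset_sInter (by rintro _ ⟨T, hT, rfl⟩; exact hL hT)⟩)

end Torf

section Defs

variable {A : Type} [Ring A]

/-- `T(C)`: the smallest torsion class containing the class `C` of modules. -/
def torsGen (C : Set (ModA A)) : Tors A := sInf {T : Tors A | C ⊆ T.1}

/-- `Fac M`: the class of all quotients of finite direct sums of copies of `M`. -/
def Fac (M : ModA A) : Set (ModA A) :=
  {N | ∃ (k : ℕ) (f : (Fin k → M.carrier) →ₗ[Aᵐᵒᵖ] N.carrier), Surjective f}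

/-- A class of modules is functorially finite (as a torsion class) when it is
of the form `Fac M`. -/
def IsFFSet (X : Set (ModA A)) : Prop := ∃ M : ModA A, X = Fac M

/-- A torsion class is functorially finite when it is of the form `Fac M`. -/
def IsFunctoriallyFinite (T : Tors A) : Prop := IsFFSet T.1

/-- The right Hom-orthogonal class `X^⊥`. -/
def rightPerp (X : Set (ModA A)) : Set (ModA A) :=
  {M | ∀ N ∈ X, ∀ f : N.carrier →ₗ[Aᵐᵒᵖ] M.carrier, f = 0}

/-- The left Hom-orthogonal class `^⊥X`. -/
def leftPerp (X : Set (ModA A)) : Set (ModA A) :=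
  {N | ∀ M ∈ X, ∀ f : N.carrier →ₗ[Aᵐᵒᵖ] M.carrier, f = 0}

/-- A brick: a nonzero module all of whose nonzero endomorphisms are isomorphisms. -/
def IsBrick (B : ModA A) : Prop :=
  Nontrivial B.carrier ∧
    ∀ f : B.carrier →ₗ[Aᵐᵒᵖ] B.carrier, f ≠ 0 → Bijective f

end Defs

/-- `f-tors A`: the poset of functorially finite torsion classes, ordered by inclusion. -/
def FTors (A : Type) [Ring A] : Type 1 := {T : Tors A // IsFunctoriallyFinite T}

instance {A : Type} [Ring A] : PartialOrder (FTors A) := Subtype.partialOrder _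

section Simples

variable (A : Type) [Ring A]

/-- The type of simple objects of `mod A`. -/
def SimpleMod : Type 1 := {S : ModA A // IsSimpleModule Aᵐᵒᵖ S.carrier}

/-- Isomorphism of simple modules, as an equivalence relation. -/
def simpleIsoSetoid : Setoid (SimpleMod A) where
  r S T := Nonempty (S.1.carrier ≃ₗ[Aᵐᵒᵖ] T.1.carrier)
  iseqv := ⟨fun _ => ⟨LinearEquiv.refl _ _⟩, fun ⟨e⟩ => ⟨e.symm⟩, fun ⟨e⟩ ⟨f⟩ => ⟨e.trans f⟩⟩

/-- The number of isomorphism classes of simple right `A`-modules. -/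
noncomputable def numSimples : ℕ := Nat.card (Quotient (simpleIsoSetoid A))

end Simples

section Lattice

/-- Upper semimodularity: if `a` and `b` both cover `a ⊓ b`, then `a ⊔ b` covers
both `a` and `b`. -/
def UpperSemimodular (α : Type*) [Lattice α] : Prop :=
  ∀ a b : α, a ⊓ b ⋖ a → a ⊓ b ⋖ b → a ⋖ a ⊔ b ∧ b ⋖ a ⊔ b

/-- Lower semimodularity: if `a ⊔ b` covers both `a` and `b`, then `a` and `b` both
cover `a ⊓ b`. -/
def LowerSemimodular (α : Type*) [Lattice α] : Prop :=
  ∀ a b : α, a ⋖ a ⊔ b → b ⋖ a ⊔ b → a ⊓ b ⋖ a ∧ a ⊓ b ⋖ b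

/-- An element `x` of a complete lattice is completely join irreducible if the join of
all elements strictly below `x` is strictly below `x`. -/
def CompletelyJoinIrred {α : Type*} [CompleteLattice α] (x : α) : Prop :=
  sSup {y | y < x} < x

end Lattice

/-- The statement that the poset `f-tors A` forms a lattice: any two functorially finite
torsion classes have a least upper bound and a greatest lower bound within `f-tors A`. -/
def FTorsIsLattice (A : Type) [Ring A] : Prop :=
  ∀ a b : FTors A, (∃ m, IsGLB {a, b} m) ∧ (∃ j, IsLUB {a, b} j)

/-- Upper semimodularity for the poset `f-tors A`. -/
def FTorsUpperSemimodular (A : Type) [Ring A] : Prop :=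
  ∀ a b m j : FTors A, IsGLB {a, b} m → IsLUB {a, b} j →
    m ⋖ a → m ⋖ b → a ⋖ j ∧ b ⋖ j

/-- Lower semimodularity for the poset `f-tors A`. -/
def FTorsLowerSemimodular (A : Type) [Ring A] : Prop :=
  ∀ a b m j : FTors A, IsGLB {a, b} m → IsLUB {a, b} j →
    a ⋖ j → b ⋖ j → m ⋖ a ∧ m ⋖ b

/-- A realization of a `K`-algebra `A` as a finite product of finite-dimensional
local `K`-algebras. -/
structure LocalAlgebraFactorization (K : Type) [Field K] (A : Type) [Ring A] [Algebra K A] where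
  m : ℕ
  B : Fin m → Type
  [ringB : ∀ i, Ring (B i)]
  [algB : ∀ i, Algebra K (B i)]
  finB : ∀ i, FiniteDimensional K (B i)
  localB : ∀ i, IsLocalRing (B i)
  equiv : A ≃ₐ[K] ∀ i, B i

/-- An indecomposable module: nonzero, and not the internal direct sum of two nonzero
submodules. -/
def IsIndecomposableModule (R M : Type*) [Ring R] [AddCommGroup M] [Module R M] : Prop :=
  Nontrivial M ∧ ∀ S T : Submodule R M, IsCompl S T → S = ⊥ ∨ T = ⊥

/-! A nonzero map from a module of `T(B)` to a brick `B` is onto: its image lies in `T(B)`, so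
admits a nonzero map from `B`, and the composite is a nonzero endomorphism of `B`. Hence every
torsion class strictly below `T(B)` lies in `^⊥B`, and so does their join, which is therefore
strictly below `T(B)`. Two bricks generating the same torsion class get surjections in both
directions whose composite is an automorphism, so they are isomorphic.

Conversely let `T` be completely join irreducible and `U` the join of all torsion classes strictly
below `T`. A module of `T` outside `U`, divided by its largest submodule in `U`, is a nonzero module
of `T ∩ U^⊥`. Over a right artinian ring, a minimal nonzero submodule of it lying in `T` is a
brick `B`, and `T(B) = T` since `B ∉ U`. -/

namespace ModA

abbrev of (A : Type) [Ring A] (M : Type) [AddCommGroup M] [Module Aᵐᵒᵖ M]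
    [Module.Finite Aᵐᵒᵖ M] : ModA A :=
  ⟨M⟩

end ModA

section TorsionClasses

variable {A : Type} [Ring A]

namespace Tors

theorem mem_of_subsingleton (T : Tors A) {M : ModA A} (hM : Subsingleton M) : M ∈ T.1 :=
  T.2.1 M hM

theorem mem_of_surjective (T : Tors A) {M N : ModA A} (hM : M ∈ T.1)
    (f : M →ₗ[Aᵐᵒᵖ] N) (hf : Surjective f) : N ∈ T.1 :=
  T.2.2.1 M N hM f hf

theorem mem_of_le_of_map_mkQ_mem (T : Tors A) {M : ModA A} {S S' : Submodule Aᵐᵒᵖ M}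
    [Module.Finite Aᵐᵒᵖ S] [Module.Finite Aᵐᵒᵖ S'] (hSS' : S ≤ S')
    (hS : ModA.of A S ∈ T.1) (hS' : ModA.of A (S'.map S.mkQ) ∈ T.1) : ModA.of A S' ∈ T.1 :=
  T.2.2.2 (ModA.of A S) (ModA.of A S') (ModA.of A (S'.map S.mkQ)) (Submodule.inclusion hSS')
    (S.mkQ.submoduleMap S') (Submodule.inclusion_injective hSS')
    (S.mkQ.submoduleMap_surjective S')
    (by rw [Submodule.range_inclusion, LinearMap.ker_submoduleMap, Submodule.ker_mkQ]) hS hS'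

end Tors

theorem subset_torsGen (C : Set (ModA A)) : C ⊆ (torsGen C).1 := fun _ hB =>
  Set.mem_sInter.2 (by rintro _ ⟨T, hT, rfl⟩; exact hT hB)

theorem torsGen_le_iff {C : Set (ModA A)} {T : Tors A} : torsGen C ≤ T ↔ C ⊆ T.1 :=
  ⟨fun h => (subset_torsGen C).trans h, fun h => sInf_le h⟩

theorem torsGen_singleton_le_iff {B : ModA A} {T : Tors A} : torsGen {B} ≤ T ↔ B ∈ T.1 :=
  torsGen_le_iff.trans Set.singleton_subset_iff

theorem mem_torsGen_singleton (B : ModA A) : B ∈ (torsGen {B}).1 :=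
  subset_torsGen {B} rfl

theorem isTorsionClass_leftPerp (X : Set (ModA A)) : IsTorsionClass (leftPerp X) := by
  refine ⟨fun N hN M _ f => ?_, fun M N hM f hf P hP g => ?_,
    fun X' Y Z f g _ hg hfg hX hZ P hP h => ?_⟩
  · ext x
    simp [Subsingleton.elim x 0]
  · exact (LinearMap.cancel_right hf).1 (by rw [LinearMap.zero_comp]; exact hM P hP _)
  · have hker : LinearMap.ker g ≤ LinearMap.ker h :=
      hfg ▸ LinearMap.range_le_ker_iff.2 (hX P hP _)
    have hφ := hZ P hP ((LinearMap.ker g).liftQ h hker ∘ₗ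
      (g.quotKerEquivOfSurjective hg).symm.toLinearMap)
    ext y
    simpa using LinearMap.congr_fun hφ (g y)

def leftPerpTors (X : Set (ModA A)) : Tors A := ⟨leftPerp X, isTorsionClass_leftPerp X⟩

theorem exists_ne_zero_of_mem_torsGen {C : Set (ModA A)} {M : ModA A} (hM : M ∈ (torsGen C).1)
    [Nontrivial M] : ∃ B ∈ C, ∃ f : B →ₗ[Aᵐᵒᵖ] M, f ≠ 0 := by
  by_contra! hM_perp
  have hC : C ⊆ leftPerp (rightPerp C) := fun B hB P hP f => hP B hB f
  have hM' : M ∈ leftPerp (rightPerp C) := torsGen_le_iff (T := leftPerpTors _) |>.2 hC hM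
  exact one_ne_zero (hM' M hM_perp LinearMap.id)

theorem exists_ne_zero_of_mem_torsGen_singleton {B M : ModA A} (hM : M ∈ (torsGen {B}).1)
    [Nontrivial M] : ∃ f : B →ₗ[Aᵐᵒᵖ] M, f ≠ 0 := by
  obtain ⟨N, hN, f, hf⟩ := exists_ne_zero_of_mem_torsGen hM
  rw [Set.mem_singleton_iff] at hN
  subst hN
  exact ⟨f, hf⟩

theorem mem_rightPerp_of_injective {X : Set (ModA A)} {M N : ModA A} (hM : M ∈ rightPerp X)
    (i : N →ₗ[Aᵐᵒᵖ] M) (hi : Injective i) : N ∈ rightPerp X := fun P hP f => by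
  ext x
  exact hi (by simpa using LinearMap.congr_fun (hM P hP (i ∘ₗ f)) x)

end TorsionClasses

section Bricks

variable {A : Type} [Ring A]

theorem IsBrick.surjective_of_mem_torsGen {B M : ModA A} (hB : IsBrick B)
    (hM : M ∈ (torsGen {B}).1) {f : M →ₗ[Aᵐᵒᵖ] B} (hf : f ≠ 0) : Surjective f := by
  have hrange : ModA.of A (LinearMap.range f) ∈ (torsGen {B}).1 :=
    Tors.mem_of_surjective _ hM f.rangeRestrict f.surjective_rangeRestrict
  have : Nontrivial (LinearMap.range f) :=
    Submodule.nontrivial_iff_ne_bot.2 (LinearMap.range_eq_bot.not.2 hf)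
  obtain ⟨g, hg⟩ := exists_ne_zero_of_mem_torsGen_singleton hrange
  have hbij := hB.2 ((LinearMap.range f).subtype ∘ₗ g) fun h =>
    hg (LinearMap.ext fun x => Subtype.ext (LinearMap.congr_fun h x))
  intro b
  obtain ⟨x, rfl⟩ := hbij.2 b
  exact (g x).2

theorem IsBrick.completelyJoinIrred_torsGen {B : ModA A} (hB : IsBrick B) :
    CompletelyJoinIrred (torsGen {B}) := by
  have hbelow : sSup {y | y < torsGen {B}} ≤ leftPerpTors {B} :=
    sSup_le fun y (hy : y < _) M hM N hN f => by
      rw [Set.mem_singleton_iff] at hN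
      subst N
      by_contra hf
      have hBy : B ∈ y.1 :=
        y.mem_of_surjective hM f (hB.surjective_of_mem_torsGen (hy.le hM) hf)
      exact hy.not_ge (torsGen_singleton_le_iff.2 hBy)
  refine lt_of_le_of_ne (sSup_le fun y hy => le_of_lt hy) fun h => ?_
  have := hB.1
  exact one_ne_zero ((h ▸ hbelow) (mem_torsGen_singleton B) B rfl LinearMap.id)

theorem IsBrick.torsGen_eq_iff {B B' : ModA A} (hB : IsBrick B) (hB' : IsBrick B') :
    torsGen {B} = torsGen {B'} ↔ Nonempty (B ≃ₗ[Aᵐᵒᵖ] B') := by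
  constructor
  · intro h
    have hB'_mem : B' ∈ (torsGen {B}).1 := h ▸ mem_torsGen_singleton B'
    have hB_mem : B ∈ (torsGen {B'}).1 := h ▸ mem_torsGen_singleton B
    have := hB.1
    have := hB'.1
    obtain ⟨f, hf⟩ := exists_ne_zero_of_mem_torsGen_singleton hB'_mem
    obtain ⟨g, hg⟩ := exists_ne_zero_of_mem_torsGen_singleton hB_mem
    have hgf_surj : Surjective (g ∘ₗ f) :=
      (hB.surjective_of_mem_torsGen hB'_mem hg).comp (hB'.surjective_of_mem_torsGen hB_mem hf)
    have hgf := hB.2 (g ∘ₗ f) fun h0 => by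
      obtain ⟨x, hx⟩ := exists_ne (0 : B)
      obtain ⟨y, rfl⟩ := hgf_surj x
      exact hx (LinearMap.congr_fun h0 y)
    exact ⟨LinearEquiv.ofBijective f
      ⟨Injective.of_comp (f := ⇑g) hgf.1, hB'.surjective_of_mem_torsGen hB_mem hf⟩⟩
  · rintro ⟨e⟩
    exact le_antisymm
      (torsGen_singleton_le_iff.2 (Tors.mem_of_surjective _ (mem_torsGen_singleton B')
        e.symm.toLinearMap e.symm.surjective))
      (torsGen_singleton_le_iff.2 (Tors.mem_of_surjective _ (mem_torsGen_singleton B)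
        e.toLinearMap e.surjective))

end Bricks

section Artinian

variable {A : Type} [Ring A] [IsArtinianRing Aᵐᵒᵖ]

theorem Tors.exists_mem_and_quotient_mem_rightPerp (T : Tors A) (M : ModA A) :
    ∃ t : Submodule Aᵐᵒᵖ M,
      ModA.of A t ∈ T.1 ∧ ModA.of A (M ⧸ t) ∈ rightPerp T.1 := by
  obtain ⟨t, ht, hmax⟩ := set_has_maximal_iff_noetherian.2 inferInstance
    {S : Submodule Aᵐᵒᵖ M | ModA.of A S ∈ T.1}
    ⟨⊥, T.mem_of_subsingleton inferInstance⟩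
  refine ⟨t, ht, fun N hN f => ?_⟩
  set S := (LinearMap.range f).comap t.mkQ
  have htS : t ≤ S := fun x hx => by
    simp [S, (Submodule.Quotient.mk_eq_zero t).2 hx]
  have hmap : S.map t.mkQ = LinearMap.range f :=
    Submodule.map_comap_eq_of_surjective t.mkQ_surjective _
  have hS : ModA.of A S ∈ T.1 := T.mem_of_le_of_map_mkQ_mem htS ht <|
    T.mem_of_surjective hN ((LinearEquiv.ofEq _ _ hmap.symm).toLinearMap ∘ₗ f.rangeRestrict)
      ((LinearEquiv.ofEq _ _ hmap.symm).surjective.comp f.surjective_rangeRestrict)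
  have htS_eq : t = S := htS.eq_of_not_lt (hmax S hS)
  rw [← LinearMap.range_eq_bot, ← hmap, ← htS_eq, Submodule.mkQ_map_self]

theorem Tors.exists_isBrick_submodule_mem {T : Tors A} {M : ModA A} (hM : M ∈ T.1)
    [Nontrivial M] :
    ∃ N : Submodule Aᵐᵒᵖ M, ModA.of A N ∈ T.1 ∧ IsBrick (ModA.of A N) := by
  obtain ⟨N, ⟨hN_ne, hNT⟩, hmin⟩ := set_has_minimal_iff_artinian.2 inferInstance
    {N : Submodule Aᵐᵒᵖ M | N ≠ ⊥ ∧ ModA.of A N ∈ T.1}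
    ⟨⊤, top_ne_bot, T.mem_of_surjective hM Submodule.topEquiv.symm.toLinearMap
      Submodule.topEquiv.symm.surjective⟩
  refine ⟨N, hNT, Submodule.nontrivial_iff_ne_bot.2 hN_ne, fun f hf => ?_⟩
  have hsurj : Surjective f := by
    set N' := (LinearMap.range f).map N.subtype
    have hN'_ne : N' ≠ ⊥ := ((Submodule.map_injective_of_injective N.injective_subtype).ne_iff'
      (Submodule.map_bot _)).2 (LinearMap.range_eq_bot.not.2 hf)
    have hN'T : ModA.of A N' ∈ T.1 := T.mem_of_surjective hNT
      (N.subtype.submoduleMap _ ∘ₗ f.rangeRestrict)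
      ((N.subtype.submoduleMap_surjective _).comp f.surjective_rangeRestrict)
    have hN' : N' = N :=
      (Submodule.map_subtype_le N _).eq_of_not_lt (hmin N' ⟨hN'_ne, hN'T⟩)
    rw [← LinearMap.range_eq_top]
    exact Submodule.map_injective_of_injective N.injective_subtype
      (hN'.trans (Submodule.map_subtype_top N).symm)
  exact ⟨IsNoetherian.injective_of_surjective_endomorphism f hsurj, hsurj⟩

theorem CompletelyJoinIrred.exists_isBrick_eq_torsGen {T : Tors A} (hT : CompletelyJoinIrred T) :
    ∃ B : ModA A, IsBrick B ∧ T = torsGen {B} := by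
  set U := sSup {y | y < T}
  obtain ⟨M, hMT, hMU⟩ := Set.not_subset.1 (hT.not_ge : ¬ T ≤ U)
  obtain ⟨t, htU, hperp⟩ := U.exists_mem_and_quotient_mem_rightPerp M
  have : Nontrivial (M ⧸ t) := Submodule.Quotient.nontrivial_iff.2 fun ht => hMU <|
    U.mem_of_surjective htU t.subtype
      (by rw [← LinearMap.range_eq_top, Submodule.range_subtype, ht])
  obtain ⟨N, hNT, hN⟩ := T.exists_isBrick_submodule_mem
    (T.mem_of_surjective hMT t.mkQ t.mkQ_surjective : ModA.of A (M ⧸ t) ∈ T.1)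
  have hNU : ModA.of A N ∈ rightPerp U.1 :=
    mem_rightPerp_of_injective hperp N.subtype N.injective_subtype
  refine ⟨ModA.of A N, hN, ((torsGen_singleton_le_iff.2 hNT).eq_of_not_lt fun hlt => ?_).symm⟩
  have := hN.1
  exact one_ne_zero (hNU _ (torsGen_singleton_le_iff.1 (le_sSup hlt)) LinearMap.id)

end Artinian

theorem stmt12_general (K A : Type) [Field K] [Ring A] [Algebra K A]
    [FiniteDimensional K A] :
    (∀ B : ModA A, IsBrick B → CompletelyJoinIrred (torsGen ({B} : Set (ModA A)))) ∧
    (∀ B B' : ModA A, IsBrick B → IsBrick B' →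
      (torsGen ({B} : Set (ModA A)) = torsGen {B'} ↔
        Nonempty (B.carrier ≃ₗ[Aᵐᵒᵖ] B'.carrier))) ∧
    (∀ T : Tors A, CompletelyJoinIrred T →
      ∃ B : ModA A, IsBrick B ∧ T = torsGen {B}) := by
  have : IsArtinianRing Aᵐᵒᵖ := IsArtinianRing.of_finite K Aᵐᵒᵖ
  exact ⟨fun _ hB => hB.completelyJoinIrred_torsGen, fun _ _ hB hB' => hB.torsGen_eq_iff hB',
    fun _ hT => hT.exists_isBrick_eq_torsGen⟩

/-- `B ↦ T(B)` induces a bijection from the set of isomorphism classes of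
bricks in `mod A` to the set of completely join irreducible elements of `tors A`. -/
theorem stmt12 (K A : Type) [Field K] [IsAlgClosed K] [Ring A] [Algebra K A]
    [FiniteDimensional K A] :
    (∀ B : ModA A, IsBrick B → CompletelyJoinIrred (torsGen ({B} : Set (ModA A)))) ∧
    (∀ B B' : ModA A, IsBrick B → IsBrick B' →
      (torsGen ({B} : Set (ModA A)) = torsGen {B'} ↔
        Nonempty (B.carrier ≃ₗ[Aᵐᵒᵖ] B'.carrier))) ∧
    (∀ T : Tors A, CompletelyJoinIrred T →
      ∃ B : ModA A, IsBrick B ∧ T = torsGen {B}) :=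
  stmt12_general K A
end

section
/- Let S_1,...,S_n be a complete set of pairwise non-isomorphic simple A-modules. For any subsets I and J of {1,...,n}: (1) T({S_i : i∈I}) = T({S_j : j∈J}) if and only if I = J; (2) the join of T({S_i : i∈I}) and T({S_j : j∈J}) in tors A equals T({S_k : k∈I∪J}); (3) their meet equals T({S_k : k∈I∩J}). In particular T(∅) is the zero torsion class and T({S_1,...,S_n}) = mod A. -/
/-! Preamble: the category `mod A` of finite-dimensional right `A`-modules,
torsion(-free) classes, the complete lattice `tors A`, functorially finite
torsion classes, bricks, etc. -/

open Function

/-! Over an Artinian ring a module is built from its simple subquotients by finitely many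
extensions, so a torsion class contains every module all of whose simple subquotients it
contains; conversely, the modules whose simple subquotients all lie in a fixed class form a
torsion class. Hence, for a set `C` of simple modules, `T(C)` consists exactly of the modules
whose composition factors are isomorphic to members of `C`, and all the claims reduce to
statements about sets of simples, where pairwise non-isomorphism of the `S i` makes
`I ↦ {X | X ≅ S i for some i ∈ I}` injective and compatible with intersections. -/

section Subquotients

variable {A : Type} [Ring A]

def IsSubquotient (X M : ModA A) : Prop :=
  ∃ (N : Submodule Aᵐᵒᵖ M) (g : N →ₗ[Aᵐᵒᵖ] X), Surjective g

def simpleFactorsIn (D : Set (ModA A)) : Set (ModA A) :=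
  {M | ∀ X : ModA A, IsSimpleModule Aᵐᵒᵖ X → IsSubquotient X M → X ∈ D}

def isoClosure (C : Set (ModA A)) : Set (ModA A) :=
  {X | ∃ Y ∈ C, Nonempty (X ≃ₗ[Aᵐᵒᵖ] Y)}

theorem IsSubquotient.refl (M : ModA A) : IsSubquotient M M :=
  ⟨⊤, Submodule.topEquiv.toLinearMap, Submodule.topEquiv.surjective⟩

theorem IsSubquotient.subsingleton {X M : ModA A} (h : IsSubquotient X M)
    [Subsingleton M] : Subsingleton X := by
  obtain ⟨N, g, hg⟩ := h
  exact hg.subsingleton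

theorem IsSubquotient.of_surjective {X M N : ModA A} (h : IsSubquotient X N)
    {π : M →ₗ[Aᵐᵒᵖ] N} (hπ : Surjective π) : IsSubquotient X M := by
  obtain ⟨L, g, hg⟩ := h
  refine ⟨L.comap π, g ∘ₗ π.restrict fun _ hx => hx, hg.comp ?_⟩
  rintro ⟨y, hy⟩
  obtain ⟨x, rfl⟩ := hπ y
  exact ⟨⟨x, hy⟩, rfl⟩

theorem IsSubquotient.of_exact {X Y Z Q : ModA A} [IsSimpleModule Aᵐᵒᵖ Q]
    {f : X →ₗ[Aᵐᵒᵖ] Y} {g : Y →ₗ[Aᵐᵒᵖ] Z} (hfg : LinearMap.range f = LinearMap.ker g)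
    (h : IsSubquotient Q Y) : IsSubquotient Q X ∨ IsSubquotient Q Z := by
  obtain ⟨N, p, hp⟩ := h
  -- `p` maps `N ∩ ker g = N ∩ range f` to `0` or onto the simple `Q`: in the first case `Q` is a
  -- quotient of `g(N) ≅ N ⧸ (N ∩ ker g)`, in the second one of `f⁻¹(N)`.
  let φ : N →ₗ[Aᵐᵒᵖ] N.map g := g.submoduleMap N
  rcases eq_bot_or_eq_top ((LinearMap.ker φ).map p) with hK | hK
  · have hle : LinearMap.ker φ ≤ LinearMap.ker p := Submodule.map_le_iff_le_comap.1 hK.le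
    let e := (φ.quotKerEquivOfSurjective (g.submoduleMap_surjective N)).symm
    refine Or.inr ⟨N.map g, (LinearMap.ker φ).liftQ p hle ∘ₗ e.toLinearMap, ?_⟩
    rw [LinearMap.coe_comp, LinearEquiv.coe_toLinearMap]
    refine Surjective.comp (fun q => ?_) e.surjective
    obtain ⟨y, rfl⟩ := hp q
    exact ⟨Submodule.Quotient.mk y, rfl⟩
  · refine Or.inl ⟨N.comap f, p ∘ₗ f.restrict fun _ hx => hx, fun q => ?_⟩
    obtain ⟨y, hy, rfl⟩ : q ∈ (LinearMap.ker φ).map p := hK ▸ Submodule.mem_top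
    have hy' : (y : Y) ∈ LinearMap.range f := by
      rw [hfg]
      exact congrArg Subtype.val (LinearMap.mem_ker.1 hy)
    obtain ⟨x, hx⟩ := hy'
    exact ⟨⟨x, show f x ∈ N from hx ▸ y.2⟩, congrArg p (Subtype.ext hx)⟩

theorem IsSubquotient.nonempty_linearEquiv {X M : ModA A} [IsSimpleModule Aᵐᵒᵖ X]
    [IsSimpleModule Aᵐᵒᵖ M] (h : IsSubquotient X M) : Nonempty (X ≃ₗ[Aᵐᵒᵖ] M) := by
  obtain ⟨N, g, hg⟩ := h
  have := IsSimpleModule.nontrivial Aᵐᵒᵖ X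
  rcases eq_bot_or_eq_top N with rfl | rfl
  · exact absurd hg.subsingleton (not_subsingleton X)
  · have := IsSimpleModule.congr (Submodule.topEquiv (R := Aᵐᵒᵖ) (M := M))
    have hbij := LinearMap.bijective_of_ne_zero (LinearMap.ne_zero_of_surjective hg)
    exact ⟨(LinearEquiv.ofBijective g hbij).symm.trans Submodule.topEquiv⟩

theorem simpleFactorsIn_mono {D E : Set (ModA A)} (h : D ⊆ E) :
    simpleFactorsIn D ⊆ simpleFactorsIn E :=
  fun _ hM X hX hXM => h (hM X hX hXM)

theorem simpleFactorsIn_inter (D E : Set (ModA A)) :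
    simpleFactorsIn (D ∩ E) = simpleFactorsIn D ∩ simpleFactorsIn E := by
  ext M
  exact ⟨fun h => ⟨fun X hX hXM => (h X hX hXM).1, fun X hX hXM => (h X hX hXM).2⟩,
    fun h X hX hXM => ⟨h.1 X hX hXM, h.2 X hX hXM⟩⟩

theorem simpleFactorsIn_eq_univ {D : Set (ModA A)}
    (h : ∀ X : ModA A, IsSimpleModule Aᵐᵒᵖ X → X ∈ D) : simpleFactorsIn D = Set.univ :=
  Set.eq_univ_of_forall fun _ X hX _ => h X hX

theorem mem_of_mem_simpleFactorsIn {D : Set (ModA A)} {X : ModA A}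
    (hX : IsSimpleModule Aᵐᵒᵖ X) (h : X ∈ simpleFactorsIn D) : X ∈ D :=
  h X hX (.refl X)

theorem isTorsionClass_simpleFactorsIn (D : Set (ModA A)) :
    IsTorsionClass (simpleFactorsIn D) := by
  refine ⟨fun N hN X hX hXN => ?_, fun M N hM π hπ X hX hXN => hM X hX (hXN.of_surjective hπ),
    fun X Y Z f g _ _ hfg hX hZ Q hQ hQY => ?_⟩
  · have := IsSimpleModule.nontrivial Aᵐᵒᵖ X
    exact absurd hXN.subsingleton (not_subsingleton X)
  · rcases hQY.of_exact hfg with h | h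
    exacts [hX Q hQ h, hZ Q hQ h]

end Subquotients

section TorsionClasses

variable {A : Type} [Ring A]

theorem IsTorsionClass.mem_of_linearEquiv {T : Set (ModA A)} (hT : IsTorsionClass T)
    {M N : ModA A} (hM : M ∈ T) (e : M ≃ₗ[Aᵐᵒᵖ] N) : N ∈ T :=
  hT.2.1 M N hM e.toLinearMap e.surjective

theorem isTorsionClass_subsingleton : IsTorsionClass {M : ModA A | Subsingleton M} := by
  refine ⟨fun _ h => h, fun M N (_ : Subsingleton M) f hf => hf.subsingleton,
    fun X Y Z f g _ _ hfg (_ : Subsingleton X) (_ : Subsingleton Z) => ?_⟩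
  have hzero : ∀ y : Y, y = 0 := fun y => by
    obtain ⟨x, rfl⟩ : y ∈ LinearMap.range f := hfg ▸ LinearMap.mem_ker.2 (Subsingleton.elim _ _)
    rw [Subsingleton.elim x 0, map_zero]
  exact ⟨fun y y' => (hzero y).trans (hzero y').symm⟩

theorem gc_torsGen : GaloisConnection (torsGen (A := A)) Subtype.val :=
  fun _ _ => torsGen_le_iff

theorem Tors.val_inf (T U : Tors A) : (T ⊓ U).1 = T.1 ∩ U.1 := by
  refine Set.Subset.antisymm (fun M hM => ⟨inf_le_left (a := T) (b := U) hM,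
    inf_le_right (a := T) (b := U) hM⟩) ?_
  rintro M ⟨hT, hU⟩
  refine Set.mem_sInter.2 ?_
  rintro _ ⟨V, rfl | rfl, rfl⟩ <;> assumption

theorem val_torsGen_empty : (torsGen (∅ : Set (ModA A))).1 = {M : ModA A | Subsingleton M} :=
  Set.Subset.antisymm
    (torsGen_le_iff (T := ⟨_, isTorsionClass_subsingleton⟩).2 (Set.empty_subset _))
    fun M hM => Set.mem_sInter.2 fun _ ⟨T, _, hT⟩ => hT ▸ T.2.1 M hM

end TorsionClasses

section Artinian

variable {A : Type} [Ring A] [IsArtinianRing Aᵐᵒᵖ]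

theorem IsTorsionClass.simpleFactorsIn_subset {T : Set (ModA A)} (hT : IsTorsionClass T) :
    simpleFactorsIn T ⊆ T := by
  intro M hM
  -- Artinian induction on `N ≤ M`; a maximal submodule `P` of `N` exists as `M` is also
  -- Noetherian, and `N` is an extension of the simple module `N ⧸ P` by `P`.
  have key : ∀ N : Submodule Aᵐᵒᵖ M, (⟨N⟩ : ModA A) ∈ T := by
    intro N
    induction N using WellFoundedLT.induction with
    | _ N ih =>
    rcases eq_or_ne N ⊥ with rfl | hN
    · exact hT.1 _ inferInstance
    obtain ⟨P, -, hPN⟩ := exists_le_covBy_of_lt (bot_lt_iff_ne_bot.2 hN)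
    let P' := P.comap N.subtype
    have : IsSimpleModule Aᵐᵒᵖ (N ⧸ P') := (covBy_iff_quot_is_simple hPN.le).1 hPN
    refine hT.2.2 ⟨P⟩ ⟨N⟩ ⟨N ⧸ P'⟩ (Submodule.inclusion hPN.le) P'.mkQ
      (Submodule.inclusion_injective _) P'.mkQ_surjective ?_ (ih P hPN.lt)
      (hM _ this ⟨N, P'.mkQ, P'.mkQ_surjective⟩)
    rw [Submodule.range_inclusion, Submodule.ker_mkQ]
  exact hT.2.1 ⟨(⊤ : Submodule Aᵐᵒᵖ M)⟩ M (key ⊤) Submodule.topEquiv.toLinearMap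
    Submodule.topEquiv.surjective

theorem val_torsGen_eq_simpleFactorsIn {C : Set (ModA A)}
    (hC : ∀ X ∈ C, IsSimpleModule Aᵐᵒᵖ X) :
    (torsGen C).1 = simpleFactorsIn (isoClosure C) := by
  refine Set.Subset.antisymm (torsGen_le_iff (T := ⟨_, isTorsionClass_simpleFactorsIn _⟩).2 ?_)
    ((simpleFactorsIn_mono ?_).trans (torsGen C).2.simpleFactorsIn_subset)
  · intro X hX Q _ hQX
    have := hC X hX
    exact ⟨X, hX, hQX.nonempty_linearEquiv⟩
  · rintro X ⟨Y, hY, ⟨e⟩⟩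
    exact (torsGen C).2.mem_of_linearEquiv (subset_torsGen C hY) e.symm

end Artinian

section PairwiseNonisomorphic

variable {A : Type} [Ring A] {ι : Type*} {S : ι → ModA A}

theorem mem_isoClosure_image_iff (hS : Pairwise fun i j => IsEmpty (S i ≃ₗ[Aᵐᵒᵖ] S j))
    {i : ι} {J : Set ι} : S i ∈ isoClosure (S '' J) ↔ i ∈ J := by
  refine ⟨?_, fun hi => ⟨S i, ⟨i, hi, rfl⟩, ⟨LinearEquiv.refl _ _⟩⟩⟩
  rintro ⟨_, ⟨j, hj, rfl⟩, ⟨e⟩⟩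
  obtain rfl : i = j := of_not_not fun hij => (hS hij).false e
  exact hj

theorem isoClosure_image_inter (hS : Pairwise fun i j => IsEmpty (S i ≃ₗ[Aᵐᵒᵖ] S j))
    (I J : Set ι) : isoClosure (S '' I) ∩ isoClosure (S '' J) = isoClosure (S '' (I ∩ J)) := by
  refine Set.Subset.antisymm ?_ fun X ⟨_, ⟨k, ⟨hkI, hkJ⟩, hk⟩, e⟩ =>
    ⟨⟨_, ⟨k, hkI, hk⟩, e⟩, ⟨_, ⟨k, hkJ, hk⟩, e⟩⟩
  rintro X ⟨⟨_, ⟨i, hi, rfl⟩, ⟨e⟩⟩, ⟨_, ⟨j, hj, rfl⟩, ⟨e'⟩⟩⟩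
  obtain rfl : i = j := of_not_not fun hij => (hS hij).false (e.symm.trans e')
  exact ⟨S i, ⟨i, ⟨hi, hj⟩, rfl⟩, ⟨e⟩⟩

end PairwiseNonisomorphic

theorem stmt14_general (K A : Type) [Field K] [Ring A] [Algebra K A]
    [FiniteDimensional K A]
    (n : ℕ) (S : Fin n → ModA A)
    (hsimple : ∀ i, IsSimpleModule Aᵐᵒᵖ (S i).carrier)
    (hpairwise : ∀ i j, i ≠ j → IsEmpty ((S i).carrier ≃ₗ[Aᵐᵒᵖ] (S j).carrier))
    (hcomplete : ∀ M : ModA A, IsSimpleModule Aᵐᵒᵖ M.carrier →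
      ∃ i, Nonempty (M.carrier ≃ₗ[Aᵐᵒᵖ] (S i).carrier)) :
    (∀ I J : Set (Fin n), torsGen (S '' I) = torsGen (S '' J) ↔ I = J) ∧
    (∀ I J : Set (Fin n),
      torsGen (S '' I) ⊔ torsGen (S '' J) = torsGen (S '' (I ∪ J))) ∧
    (∀ I J : Set (Fin n),
      torsGen (S '' I) ⊓ torsGen (S '' J) = torsGen (S '' (I ∩ J))) ∧
    (torsGen (∅ : Set (ModA A))).1 = {M : ModA A | Subsingleton M.carrier} ∧
    (torsGen (Set.range S)).1 = Set.univ := by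
  have : IsArtinianRing Aᵐᵒᵖ := IsArtinianRing.of_finite K Aᵐᵒᵖ
  have hT (I : Set (Fin n)) : (torsGen (S '' I)).1 = simpleFactorsIn (isoClosure (S '' I)) :=
    val_torsGen_eq_simpleFactorsIn (by rintro _ ⟨i, -, rfl⟩; exact hsimple i)
  have hmem (i : Fin n) (J : Set (Fin n)) : S i ∈ (torsGen (S '' J)).1 ↔ i ∈ J := by
    refine ⟨fun h => (mem_isoClosure_image_iff hpairwise).1 ?_,
      fun hi => subset_torsGen _ ⟨i, hi, rfl⟩⟩
    exact mem_of_mem_simpleFactorsIn (hsimple i) (hT J ▸ h)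
  refine ⟨fun I J => ⟨fun h => Set.ext fun i => by rw [← hmem, h, hmem], fun h => h ▸ rfl⟩,
    fun I J => by rw [Set.image_union]; exact gc_torsGen.l_sup.symm, fun I J => Subtype.ext ?_,
    val_torsGen_empty, ?_⟩
  · rw [Tors.val_inf, hT, hT, hT, ← simpleFactorsIn_inter, isoClosure_image_inter hpairwise]
  · rw [← Set.image_univ, hT]
    refine simpleFactorsIn_eq_univ fun M hM => ?_
    obtain ⟨i, e⟩ := hcomplete M hM
    exact ⟨S i, ⟨i, trivial, rfl⟩, e⟩

/-- for a complete set `S_1, ..., S_n` of pairwise non-isomorphic simple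
`A`-modules and subsets `I, J ⊆ {1, ..., n}`: `T({S_i : i ∈ I}) = T({S_j : j ∈ J})` iff
`I = J`; the join (resp. meet) of `T({S_i : i ∈ I})` and `T({S_j : j ∈ J})` is
`T({S_k : k ∈ I ∪ J})` (resp. `T({S_k : k ∈ I ∩ J})`); moreover `T(∅)` is the zero
torsion class and `T({S_1, ..., S_n}) = mod A`. -/
theorem stmt14 (K A : Type) [Field K] [IsAlgClosed K] [Ring A] [Algebra K A]
    [FiniteDimensional K A]
    (n : ℕ) (S : Fin n → ModA A)
    (hsimple : ∀ i, IsSimpleModule Aᵐᵒᵖ (S i).carrier)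
    (hpairwise : ∀ i j, i ≠ j → IsEmpty ((S i).carrier ≃ₗ[Aᵐᵒᵖ] (S j).carrier))
    (hcomplete : ∀ M : ModA A, IsSimpleModule Aᵐᵒᵖ M.carrier →
      ∃ i, Nonempty (M.carrier ≃ₗ[Aᵐᵒᵖ] (S i).carrier)) :
    (∀ I J : Set (Fin n), torsGen (S '' I) = torsGen (S '' J) ↔ I = J) ∧
    (∀ I J : Set (Fin n),
      torsGen (S '' I) ⊔ torsGen (S '' J) = torsGen (S '' (I ∪ J))) ∧
    (∀ I J : Set (Fin n),
      torsGen (S '' I) ⊓ torsGen (S '' J) = torsGen (S '' (I ∩ J))) ∧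
    (torsGen (∅ : Set (ModA A))).1 = {M : ModA A | Subsingleton M.carrier} ∧
    (torsGen (Set.range S)).1 = Set.univ :=
  stmt14_general K A n S hsimple hpairwise hcomplete
end
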